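/- arXiv:2012.03676 — 2 statements merged into one kernel-verified Lean document; each statement's English description precedes it below -/
import Mathlib

section
/- For any symmetric positive definite matrix Y in R^{n×n}, scalars h₁ ≤ τ ≤ h₂, and any continuously differentiable z : R → R^n, the inequality -(h₂ - h₁) ∫_{t-h₂}^{t-h₁} ż(s)^T Y ż(s) ds ≤ η^T M η holds, where η = [z(t-h₁); z(t-τ); z(t-h₂)] and M = [[-Y, Y, 0],[Y, -2Y, Y],[0, Y, -Y]]. -/
/-!
Each piece of the split interval is handled by Jensen's inequality for the convex function
`x ↦ xᵀ Y x` applied to the average of `ż`, which is a difference quotient of `z`: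
`(z q - z p)ᵀ Y (z q - z p) ≤ (q - p) ∫_p^q żᵀ Y ż`. Both pieces have length at most `h₂ - h₁`
and nonnegative integrands, so the two estimates add up to the claim, whose right-hand side is
`-(z(t-h₁) - z(t-τ))ᵀ Y (⋯) - (z(t-τ) - z(t-h₂))ᵀ Y (⋯)`.
-/

open scoped Kronecker
open Matrix Set MeasureTheory intervalIntegral

theorem ConvexOn.map_interval_average_le {E : Type*} [NormedAddCommGroup E] [NormedSpace ℝ E]
    [CompleteSpace E] {φ : E → ℝ} (hφ : ConvexOn ℝ univ φ) (hφc : Continuous φ) {f : ℝ → E}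
    (hf : Continuous f) {a b : ℝ} (hab : a ≠ b) :
    φ (⨍ s in a..b, f s) ≤ ⨍ s in a..b, φ (f s) :=
  hφ.map_set_average_le hφc.continuousOn isClosed_univ (by simp [sub_eq_zero, hab.symm])
    (by simp) (by simp) hf.integrableOn_uIoc (hφc.comp hf).integrableOn_uIoc

theorem Matrix.dotProduct_kronecker_mulVec {ι m R : Type*} [Fintype ι] [Fintype m]
    [CommSemiring R] (K : Matrix ι ι R) (Y : Matrix m m R) (v : ι → m → R) :
    (fun p : ι × m => v p.1 p.2) ⬝ᵥ ((K ⊗ₖ Y) *ᵥ fun p : ι × m => v p.1 p.2) =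
      ∑ i, ∑ k, K i k * (v i ⬝ᵥ Y *ᵥ v k) := by
  simp only [dotProduct, mulVec, Fintype.sum_prod_type, kroneckerMap_apply, Finset.mul_sum]
  refine Finset.sum_congr rfl fun i _ => ?_
  rw [Finset.sum_comm]
  exact Finset.sum_congr rfl fun k _ => Finset.sum_congr rfl fun j _ =>
    Finset.sum_congr rfl fun l _ => by ring

section Quadratic

variable {m : Type*} [Fintype m]

-- The 3 × 3 factor is minus the Laplacian of the path graph 1 – 2 – 3.
theorem Matrix.dotProduct_kronecker_mulVec_fin_three {R : Type*} [CommRing R]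
    (Y : Matrix m m R) (x₁ x₂ x₃ : m → R) :
    (fun p : Fin 3 × m => ![x₁, x₂, x₃] p.1 p.2) ⬝ᵥ
        ((!![(-1 : R), 1, 0; 1, -2, 1; 0, 1, -1] ⊗ₖ Y) *ᵥ
          fun p : Fin 3 × m => ![x₁, x₂, x₃] p.1 p.2) =
      -((x₁ - x₂) ⬝ᵥ Y *ᵥ (x₁ - x₂)) - (x₂ - x₃) ⬝ᵥ Y *ᵥ (x₂ - x₃) := by
  rw [dotProduct_kronecker_mulVec]
  simp only [Fin.sum_univ_three, of_apply, cons_val', cons_val_fin_one, cons_val_zero,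
    cons_val_one, cons_val, mulVec_sub, dotProduct_sub, sub_dotProduct]
  ring

variable {Y : Matrix m m ℝ}

theorem Matrix.PosSemidef.convexOn_dotProduct_mulVec (hY : Y.PosSemidef) :
    ConvexOn ℝ univ fun x : m → ℝ => x ⬝ᵥ Y *ᵥ x := by
  refine ⟨convex_univ, fun x _ y _ a b ha hb hab => ?_⟩
  have hxy : 0 ≤ (x - y) ⬝ᵥ Y *ᵥ (x - y) := by
    simpa using hY.dotProduct_mulVec_nonneg (x - y)
  obtain rfl : b = 1 - a := by linarith
  simp only [smul_eq_mul, mulVec_add, mulVec_smul, mulVec_sub, dotProduct_add, add_dotProduct,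
    dotProduct_sub, sub_dotProduct, dotProduct_smul, smul_dotProduct] at hxy ⊢
  nlinarith [mul_nonneg ha hb]

theorem Matrix.PosSemidef.dotProduct_mulVec_sub_le_integral (hY : Y.PosSemidef)
    {z : ℝ → m → ℝ} (hz : ContDiff ℝ 1 z) {p q : ℝ} (hpq : p ≤ q) :
    (z q - z p) ⬝ᵥ Y *ᵥ (z q - z p) ≤ (q - p) * ∫ s in p..q, deriv z s ⬝ᵥ Y *ᵥ deriv z s := by
  obtain rfl | hpq := hpq.eq_or_lt
  · simp
  have hz' : Continuous (deriv z) := hz.continuous_deriv le_rfl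
  have jensen := hY.convexOn_dotProduct_mulVec.map_interval_average_le (by fun_prop) hz'
    hpq.ne
  rw [interval_average_eq, interval_average_eq, integral_deriv_eq_sub
    (fun x _ => (hz.differentiable one_ne_zero).differentiableAt) (hz'.intervalIntegrable p q)]
    at jensen
  simp only [mulVec_smul, dotProduct_smul, smul_dotProduct, smul_eq_mul] at jensen
  have hqp : 0 < q - p := sub_pos.mpr hpq
  field_simp at jensen
  linarith

theorem Matrix.PosSemidef.add_dotProduct_mulVec_sub_le_integral (hY : Y.PosSemidef)
    {z : ℝ → m → ℝ} (hz : ContDiff ℝ 1 z) {a b c : ℝ} (hab : a ≤ b) (hbc : b ≤ c) :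
    (z c - z b) ⬝ᵥ Y *ᵥ (z c - z b) + (z b - z a) ⬝ᵥ Y *ᵥ (z b - z a) ≤
      (c - a) * ∫ s in a..c, deriv z s ⬝ᵥ Y *ᵥ deriv z s := by
  have hcont : Continuous fun s => deriv z s ⬝ᵥ Y *ᵥ deriv z s := by
    have := hz.continuous_deriv le_rfl
    fun_prop
  have hnonneg : ∀ s, 0 ≤ deriv z s ⬝ᵥ Y *ᵥ deriv z s := fun s => by
    simpa using hY.dotProduct_mulVec_nonneg (deriv z s)
  have hI₁ : 0 ≤ ∫ s in a..b, deriv z s ⬝ᵥ Y *ᵥ deriv z s :=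
    integral_nonneg hab fun s _ => hnonneg s
  have hI₂ : 0 ≤ ∫ s in b..c, deriv z s ⬝ᵥ Y *ᵥ deriv z s :=
    integral_nonneg hbc fun s _ => hnonneg s
  rw [← integral_add_adjacent_intervals (hcont.intervalIntegrable a b)
    (hcont.intervalIntegrable b c)]
  nlinarith [hY.dotProduct_mulVec_sub_le_integral hz hab,
    hY.dotProduct_mulVec_sub_le_integral hz hbc,
    mul_nonneg (sub_nonneg.mpr hab) hI₂, mul_nonneg (sub_nonneg.mpr hbc) hI₁]

end Quadratic

theorem stmt_1_general {n : ℕ} (Y : Matrix (Fin n) (Fin n) ℝ) (hY : Y.PosDef)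
    (h₁ h₂ τ : ℝ) (hτ₁ : h₁ ≤ τ) (hτ₂ : τ ≤ h₂)
    (z : ℝ → Fin n → ℝ) (hz : ContDiff ℝ 1 z) (t : ℝ) :
    -(h₂ - h₁) * ∫ s in (t - h₂)..(t - h₁), deriv z s ⬝ᵥ Y *ᵥ deriv z s ≤
      (fun p : Fin 3 × Fin n => ![z (t - h₁), z (t - τ), z (t - h₂)] p.1 p.2) ⬝ᵥ
        ((!![(-1 : ℝ), 1, 0; 1, -2, 1; 0, 1, -1] ⊗ₖ Y) *ᵥ
          fun p : Fin 3 × Fin n => ![z (t - h₁), z (t - τ), z (t - h₂)] p.1 p.2) := by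
  rw [dotProduct_kronecker_mulVec_fin_three]
  have jensen := hY.posSemidef.add_dotProduct_mulVec_sub_le_integral hz
    (a := t - h₂) (b := t - τ) (c := t - h₁) (by linarith) (by linarith)
  rw [show t - h₁ - (t - h₂) = h₂ - h₁ by ring] at jensen
  linarith

/-- Jensen inequality with an intermediate delay point (Lemma 2, Peng 2008). -/
theorem stmt_1 {n : ℕ} (Y : Matrix (Fin n) (Fin n) ℝ) (hYsymm : Y.IsSymm) (hY : Y.PosDef)
    (h₁ h₂ τ : ℝ) (hτ₁ : h₁ ≤ τ) (hτ₂ : τ ≤ h₂)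
    (z : ℝ → Fin n → ℝ) (hz : ContDiff ℝ 1 z) (t : ℝ) :
    -(h₂ - h₁) * ∫ s in (t - h₂)..(t - h₁), deriv z s ⬝ᵥ Y *ᵥ deriv z s ≤
      (fun p : Fin 3 × Fin n => ![z (t - h₁), z (t - τ), z (t - h₂)] p.1 p.2) ⬝ᵥ
        ((!![(-1 : ℝ), 1, 0; 1, -2, 1; 0, 1, -1] ⊗ₖ Y) *ᵥ
          fun p : Fin 3 × Fin n => ![z (t - h₁), z (t - τ), z (t - h₂)] p.1 p.2) :=
  stmt_1_general Y hY h₁ h₂ τ hτ₁ hτ₂ z hz t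
end

section
/- For a continuously differentiable z : R → R^n and constants 0 ≤ h₁ ≤ h₂, by splitting the integral at an intermediate point t - τ with h₁ ≤ τ ≤ h₂ and applying the Cauchy–Schwarz (Jensen) inequality to each piece with weight matrix Y symmetric positive semidefinite: (h₂ - h₁) ∫_{t-h₂}^{t-h₁} ż(s)^T Y ż(s) ds ≥ (z(t-h₁) - z(t-τ))^T Y (z(t-h₁) - z(t-τ)) + (z(t-τ) - z(t-h₂))^T Y (z(t-τ) - z(t-h₂)). -/
/-!
On each of the two pieces `[t - h₂, t - τ]` and `[t - τ, t - h₁]`, write the increment of `z` as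
the integral of `ż` and apply Jensen's inequality for the quadratic form `v ↦ vᵀ Y v`; it follows
from the nonnegativity of `∫ (L ż(s) - G)ᵀ Y (L ż(s) - G) ds`, where `L` is the length of the
interval and `G = ∫ ż`. Enlarging both lengths to `h₂ - h₁` and adding the two integrals gives
the claim.
-/

open Matrix MeasureTheory

theorem Matrix.IsHermitian.dotProduct_mulVec_comm {m R : Type*} [Fintype m] [CommSemiring R]
    [StarRing R] [TrivialStar R] {Y : Matrix m m R} (hY : Y.IsHermitian) (x y : m → R) :
    x ⬝ᵥ Y *ᵥ y = y ⬝ᵥ Y *ᵥ x := by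
  rw [dotProduct_mulVec, ← mulVec_transpose, ← conjTranspose_eq_transpose_of_trivial, hY.eq,
    dotProduct_comm]

theorem intervalIntegral.integral_dotProduct_const {m : Type*} [Fintype m] {μ : Measure ℝ}
    {g : ℝ → m → ℝ} {a b : ℝ} (hg : IntervalIntegrable g μ a b) (c : m → ℝ) :
    ∫ s in a..b, g s ⬝ᵥ c ∂μ = (∫ s in a..b, g s ∂μ) ⬝ᵥ c :=
  (LinearMap.toContinuousLinearMap ((dotProductBilin ℝ ℝ).flip c)).intervalIntegral_comp_comm hg

namespace Matrix.PosSemidef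

variable {m : Type*} [Fintype m] {Y : Matrix m m ℝ}

theorem _root_.Matrix.IsHermitian.smul_sub_dotProduct_mulVec_smul_sub (hY : Y.IsHermitian)
    (L : ℝ) (x w : m → ℝ) :
    (L • x - w) ⬝ᵥ Y *ᵥ (L • x - w) =
      L ^ 2 * (x ⬝ᵥ Y *ᵥ x) - 2 * L * (x ⬝ᵥ Y *ᵥ w) + w ⬝ᵥ Y *ᵥ w := by
  simp only [sub_dotProduct, dotProduct_sub, mulVec_sub, mulVec_smul, smul_dotProduct,
    dotProduct_smul, smul_eq_mul, hY.dotProduct_mulVec_comm w x]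
  ring

theorem integral_dotProduct_mulVec_le (hY : Y.PosSemidef) {g : ℝ → m → ℝ} (hg : Continuous g)
    {a b : ℝ} (hab : a ≤ b) :
    (∫ s in a..b, g s) ⬝ᵥ Y *ᵥ (∫ s in a..b, g s) ≤ (b - a) * ∫ s in a..b, g s ⬝ᵥ Y *ᵥ g s := by
  rcases hab.eq_or_lt with rfl | hlt
  · simp
  set G := ∫ s in a..b, g s with hG
  set L := b - a with hL
  -- the "variance" of `L • g` about its integral `G` is nonnegative
  have hvar : 0 ≤ ∫ s in a..b, (L • g s - G) ⬝ᵥ Y *ᵥ (L • g s - G) :=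
    intervalIntegral.integral_nonneg hab fun s _ => by
      simpa using hY.dotProduct_mulVec_nonneg (L • g s - G)
  have hexpand : ∫ s in a..b, (L • g s - G) ⬝ᵥ Y *ᵥ (L • g s - G) =
      L * (L * (∫ s in a..b, g s ⬝ᵥ Y *ᵥ g s) - G ⬝ᵥ Y *ᵥ G) := by
    simp only [hY.1.smul_sub_dotProduct_mulVec_smul_sub]
    rw [intervalIntegral.integral_add, intervalIntegral.integral_sub,
      intervalIntegral.integral_const_mul, intervalIntegral.integral_const_mul,
      intervalIntegral.integral_dotProduct_const (hg.intervalIntegrable a b),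
      intervalIntegral.integral_const, smul_eq_mul, ← hG, ← hL]
    · ring
    all_goals exact Continuous.intervalIntegrable (by fun_prop) a b
  rw [hexpand, mul_nonneg_iff_of_pos_left (sub_pos.mpr hlt), sub_nonneg] at hvar
  exact hvar

theorem dotProduct_mulVec_sub_le_integral_deriv (hY : Y.PosSemidef) {z : ℝ → m → ℝ}
    (hz : ContDiff ℝ 1 z) {a b : ℝ} (hab : a ≤ b) :
    (z b - z a) ⬝ᵥ Y *ᵥ (z b - z a) ≤ (b - a) * ∫ s in a..b, deriv z s ⬝ᵥ Y *ᵥ deriv z s := by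
  rw [← intervalIntegral.integral_deriv_eq_sub (fun x _ => hz.differentiable one_ne_zero x)
    (hz.continuous_deriv_one.intervalIntegrable a b)]
  exact hY.integral_dotProduct_mulVec_le hz.continuous_deriv_one hab

end Matrix.PosSemidef

theorem stmt_14_general (n : ℕ)
    (Y : Matrix (Fin n) (Fin n) ℝ) (hY : Y.PosSemidef)
    (h₁ h₂ τ : ℝ) (hτ₁ : h₁ ≤ τ) (hτ₂ : τ ≤ h₂)
    (z : ℝ → Fin n → ℝ) (hz : ContDiff ℝ 1 z) (t : ℝ) :
    (z (t - h₁) - z (t - τ)) ⬝ᵥ Y *ᵥ (z (t - h₁) - z (t - τ)) +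
      (z (t - τ) - z (t - h₂)) ⬝ᵥ Y *ᵥ (z (t - τ) - z (t - h₂)) ≤
    (h₂ - h₁) * ∫ s in (t - h₂)..(t - h₁), deriv z s ⬝ᵥ Y *ᵥ deriv z s := by
  have hq : Continuous fun s => deriv z s ⬝ᵥ Y *ᵥ deriv z s := by
    have := hz.continuous_deriv_one
    fun_prop
  have hq_nonneg (s : ℝ) : 0 ≤ deriv z s ⬝ᵥ Y *ᵥ deriv z s := by
    simpa using hY.dotProduct_mulVec_nonneg (deriv z s)
  set A := ∫ s in (t - h₂)..(t - τ), deriv z s ⬝ᵥ Y *ᵥ deriv z s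
  set B := ∫ s in (t - τ)..(t - h₁), deriv z s ⬝ᵥ Y *ᵥ deriv z s
  have hA : 0 ≤ A := intervalIntegral.integral_nonneg (by linarith) fun s _ => hq_nonneg s
  have hB : 0 ≤ B := intervalIntegral.integral_nonneg (by linarith) fun s _ => hq_nonneg s
  have hsplit : ∫ s in (t - h₂)..(t - h₁), deriv z s ⬝ᵥ Y *ᵥ deriv z s = A + B :=
    (intervalIntegral.integral_add_adjacent_intervals (hq.intervalIntegrable _ _)
      (hq.intervalIntegrable _ _)).symm
  have hleft := hY.dotProduct_mulVec_sub_le_integral_deriv hz (a := t - τ) (b := t - h₁)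
    (by linarith)
  have hright := hY.dotProduct_mulVec_sub_le_integral_deriv hz (a := t - h₂) (b := t - τ)
    (by linarith)
  rw [sub_sub_sub_cancel_left] at hleft hright
  rw [hsplit]
  calc _ ≤ (τ - h₁) * B + (h₂ - τ) * A := add_le_add hleft hright
    _ ≤ (h₂ - h₁) * (A + B) := by
        nlinarith [mul_nonneg (sub_nonneg.mpr hτ₂) hB, mul_nonneg (sub_nonneg.mpr hτ₁) hA]

/-- Split-interval Jensen inequality (key step of Lemma 2, Peng 2008). -/
theorem stmt_14 (n : ℕ)
    (Y : Matrix (Fin n) (Fin n) ℝ) (hYsymm : Y.IsSymm) (hY : Y.PosSemidef)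
    (h₁ h₂ τ : ℝ) (hh₁ : 0 ≤ h₁) (hτ₁ : h₁ ≤ τ) (hτ₂ : τ ≤ h₂)
    (z : ℝ → Fin n → ℝ) (hz : ContDiff ℝ 1 z) (t : ℝ) :
    (z (t - h₁) - z (t - τ)) ⬝ᵥ Y *ᵥ (z (t - h₁) - z (t - τ)) +
      (z (t - τ) - z (t - h₂)) ⬝ᵥ Y *ᵥ (z (t - τ) - z (t - h₂)) ≤
    (h₂ - h₁) * ∫ s in (t - h₂)..(t - h₁), deriv z s ⬝ᵥ Y *ᵥ deriv z s :=
  stmt_14_general n Y hY h₁ h₂ τ hτ₁ hτ₂ z hz t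
end
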